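/- Let H be an infinite-dimensional separable complex Hilbert space with orthonormal basis (e_k)_{k≥1}, A a bounded linear operator on H, f : ℕ → ℕ with f(n) ≥ n for all n, n ∈ ℕ, z ∈ ℂ, and E ≥ 0 such that σ₁(P_{f(n)}(A − zI)|_{P_nH}) ≤ E. Then there exists x ∈ P_nH with ‖x‖ = 1 and ‖(A − zI)x‖ ≤ E + D_{f,n}(A). -/

import Mathlib

/-- The injection modulus of `T` restricted to a subspace `V`. -/
noncomputable def injModOn {H : Type*} [NormedAddCommGroup H] [InnerProductSpace ℂ H]
    (T : H →L[ℂ] H) (V : Submodule ℂ H) : ℝ :=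
  sInf ((fun x => ‖T x‖) '' {x : H | x ∈ V ∧ ‖x‖ = 1})

/-- The span `P_nH` of the first `n` basis vectors. -/
noncomputable def spanFin {H : Type*} [NormedAddCommGroup H] [InnerProductSpace ℂ H]
    (e : ℕ → H) (n : ℕ) : Submodule ℂ H :=
  Submodule.span ℂ (Set.range fun i : Fin n => e (i : ℕ))

/-- The orthogonal projection `P_n` of `H` onto the span of the first `n` basis vectors. -/
noncomputable def projCLM {H : Type*} [NormedAddCommGroup H] [InnerProductSpace ℂ H]
    [CompleteSpace H] (e : ℕ → H) (n : ℕ) : H →L[ℂ] H :=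
  haveI : FiniteDimensional ℂ (spanFin e n) :=
    FiniteDimensional.span_of_finite ℂ (Set.finite_range _)
  (spanFin e n).subtypeL.comp ((spanFin e n).orthogonalProjectionOnto)

/-- The dispersion `D_{f,n}(A) = max {‖(I - P_{f(n)}) A P_n‖, ‖(I - P_{f(n)}) A* P_n‖}`. -/
noncomputable def dispersion {H : Type*} [NormedAddCommGroup H] [InnerProductSpace ℂ H]
    [CompleteSpace H] (e : ℕ → H) (f : ℕ → ℕ) (A : H →L[ℂ] H) (n : ℕ) : ℝ :=
  max ‖((1 : H →L[ℂ] H) - projCLM e (f n)).comp (A.comp (projCLM e n))‖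
    ‖((1 : H →L[ℂ] H) - projCLM e (f n)).comp ((ContinuousLinearMap.adjoint A).comp (projCLM e n))‖

/-!
Since `P_nH` is finite dimensional, its unit sphere is compact, so the infimum defining
`σ₁(P_{f(n)}(A - zI)|_{P_nH})` is attained at some unit vector `x ∈ P_nH`. As `f(n) ≥ n`, both
`P_n` and `P_{f(n)}` fix `x`, hence
`(A - zI)x = P_{f(n)}(A - zI)x + (I - P_{f(n)}) A P_n x`,
and the second term has norm at most `‖(I - P_{f(n)}) A P_n‖ ≤ D_{f,n}(A)`.
-/

theorem norm_sub_smul_one_apply_le {𝕜 E : Type*} [NontriviallyNormedField 𝕜]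
    [NormedAddCommGroup E] [NormedSpace 𝕜 E] (A P Q : E →L[𝕜] E) (z : 𝕜) {x : E}
    (hPx : P x = x) (hQx : Q x = x) :
    ‖(A - z • (1 : E →L[𝕜] E)) x‖ ≤
      ‖(P.comp (A - z • (1 : E →L[𝕜] E))) x‖ + ‖((1 : E →L[𝕜] E) - P).comp (A.comp Q)‖ * ‖x‖ := by
  have hsplit : (A - z • (1 : E →L[𝕜] E)) x =
      (P.comp (A - z • (1 : E →L[𝕜] E))) x + (((1 : E →L[𝕜] E) - P).comp (A.comp Q)) x := by
    simp only [ContinuousLinearMap.comp_apply, sub_apply, smul_apply, one_apply_eq_self, map_sub,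
      map_smul, hPx, hQx]
    abel
  rw [hsplit]
  exact (norm_add_le _ _).trans (add_le_add le_rfl (ContinuousLinearMap.le_opNorm _ _))

section InnerProductSpace

variable {H : Type*} [NormedAddCommGroup H] [InnerProductSpace ℂ H]

theorem exists_unit_norm_apply_eq_injModOn (T : H →L[ℂ] H) (V : Submodule ℂ H)
    [FiniteDimensional ℂ V] [Nontrivial V] :
    ∃ x ∈ V, ‖x‖ = 1 ∧ ‖T x‖ = injModOn T V := by
  have hK : {x : H | x ∈ V ∧ ‖x‖ = 1} = Subtype.val '' Metric.sphere (0 : V) 1 := by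
    ext x
    constructor
    · rintro ⟨hx, hnorm⟩
      exact ⟨⟨x, hx⟩, by simpa using hnorm, rfl⟩
    · rintro ⟨⟨x, hx⟩, hs, rfl⟩
      exact ⟨hx, by simpa using hs⟩
  have hKc : IsCompact {x : H | x ∈ V ∧ ‖x‖ = 1} :=
    hK ▸ (isCompact_sphere _ _).image continuous_subtype_val
  have hKne : {x : H | x ∈ V ∧ ‖x‖ = 1}.Nonempty := by
    obtain ⟨v, hv⟩ := exists_norm_eq V zero_le_one
    exact ⟨v, v.2, by simpa using hv⟩
  obtain ⟨x, hxK, hmin⟩ := hKc.exists_isMinOn hKne T.continuous.norm.continuousOn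
  refine ⟨x, hxK.1, hxK.2, le_antisymm ?_ (csInf_le ⟨0, ?_⟩ ⟨x, hxK, rfl⟩)⟩
  · exact le_csInf (hKne.image _) (by rintro _ ⟨y, hy, rfl⟩; exact hmin hy)
  · rintro _ ⟨y, -, rfl⟩
    exact norm_nonneg _

theorem spanFin_mono (e : ℕ → H) {m k : ℕ} (h : m ≤ k) : spanFin e m ≤ spanFin e k := by
  apply Submodule.span_mono
  rintro _ ⟨i, rfl⟩
  exact ⟨⟨i, i.2.trans_le h⟩, rfl⟩

instance spanFin.finiteDimensional (e : ℕ → H) (n : ℕ) : FiniteDimensional ℂ (spanFin e n) :=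
  FiniteDimensional.span_of_finite ℂ (Set.finite_range _)

theorem nontrivial_spanFin {e : ℕ → H} (he₀ : e 0 ≠ 0) {n : ℕ} (hn : 1 ≤ n) :
    Nontrivial (spanFin e n) :=
  (Submodule.nontrivial_iff_ne_bot).2 fun hbot =>
    he₀ <| (Submodule.mem_bot ℂ).1 <| hbot ▸ Submodule.subset_span ⟨⟨0, hn⟩, rfl⟩

theorem projCLM_apply_of_mem [CompleteSpace H] (e : ℕ → H) (m : ℕ) {x : H}
    (hx : x ∈ spanFin e m) : projCLM e m x = x :=
  congrArg Subtype.val ((spanFin e m).orthogonalProjectionOnto_mem_subspace_eq_self ⟨x, hx⟩)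

end InnerProductSpace

theorem approx_eigenvector_exists_general
    {H : Type*} [NormedAddCommGroup H] [InnerProductSpace ℂ H] [CompleteSpace H]
    (e : ℕ → H) (he : Orthonormal ℂ e)
    (A : H →L[ℂ] H) (f : ℕ → ℕ) (hf : ∀ k, k ≤ f k)
    (n : ℕ) (hn : 1 ≤ n) (z : ℂ) (E : ℝ)
    (h : injModOn ((projCLM e (f n)).comp (A - z • (1 : H →L[ℂ] H))) (spanFin e n) ≤ E) :
    ∃ x ∈ spanFin e n, ‖x‖ = 1 ∧
      ‖(A - z • (1 : H →L[ℂ] H)) x‖ ≤ E + dispersion e f A n := by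
  have := nontrivial_spanFin (he.ne_zero 0) hn
  obtain ⟨x, hx, hx1, hTx⟩ :=
    exists_unit_norm_apply_eq_injModOn ((projCLM e (f n)).comp (A - z • (1 : H →L[ℂ] H)))
      (spanFin e n)
  refine ⟨x, hx, hx1, ?_⟩
  calc ‖(A - z • (1 : H →L[ℂ] H)) x‖
      ≤ ‖((projCLM e (f n)).comp (A - z • (1 : H →L[ℂ] H))) x‖ +
          ‖((1 : H →L[ℂ] H) - projCLM e (f n)).comp (A.comp (projCLM e n))‖ * ‖x‖ :=
        norm_sub_smul_one_apply_le _ _ _ z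
          (projCLM_apply_of_mem e (f n) (spanFin_mono e (hf n) hx)) (projCLM_apply_of_mem e n hx)
    _ ≤ E + dispersion e f A n := by
        rw [hTx, hx1, mul_one]
        exact add_le_add h (le_max_left _ _)

/-- If `σ₁(P_{f(n)}(A - zI)|_{P_nH}) ≤ E`, then there is a unit vector
`x ∈ P_nH` with `‖(A - zI)x‖ ≤ E + D_{f,n}(A)`. -/
theorem approx_eigenvector_exists
    {H : Type*} [NormedAddCommGroup H] [InnerProductSpace ℂ H] [CompleteSpace H]
    (e : ℕ → H) (he : Orthonormal ℂ e)
    (hdense : (Submodule.span ℂ (Set.range e)).topologicalClosure = ⊤)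
    (A : H →L[ℂ] H) (f : ℕ → ℕ) (hf : ∀ k, k ≤ f k)
    (n : ℕ) (hn : 1 ≤ n) (z : ℂ) (E : ℝ) (hE : 0 ≤ E)
    (h : injModOn ((projCLM e (f n)).comp (A - z • (1 : H →L[ℂ] H))) (spanFin e n) ≤ E) :
    ∃ x ∈ spanFin e n, ‖x‖ = 1 ∧
      ‖(A - z • (1 : H →L[ℂ] H)) x‖ ≤ E + dispersion e f A n :=
  approx_eigenvector_exists_general e he A f hf n hn z E h
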